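/- arXiv:2104.13206 — 2 statements merged into one kernel-verified Lean document; each statement's English description precedes it below -/
import Mathlib

section
/- If a symmetric n×n matrix h_{ij}(u) of smooth functions on ℝⁿ satisfies h_{mk,s} + h_{ks,m} + h_{ms,k} = 0 for all m,k,s, then each entry h_{ij} is a polynomial of degree at most 2 in the coordinates u¹,…,uⁿ. -/
namespace Stmt7Aux

variable {n : ℕ}

/-- Partial derivative in coordinate direction `c`. -/
noncomputable def D (c : Fin n) (f : (Fin n → ℝ) → ℝ) : (Fin n → ℝ) → ℝ :=
  fun u => fderiv ℝ f u (Pi.single c 1)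

lemma D_smooth {f : (Fin n → ℝ) → ℝ} (hf : ContDiff ℝ (⊤ : ℕ∞) f) (c : Fin n) :
    ContDiff ℝ (⊤ : ℕ∞) (D c f) :=
  (hf.fderiv_right (m := (⊤ : ℕ∞)) (by simp)).clm_apply contDiff_const

lemma D_comm {f : (Fin n → ℝ) → ℝ} (hf : ContDiff ℝ (⊤ : ℕ∞) f) (c d : Fin n) :
    D c (D d f) = D d (D c f) := by
  funext u
  have key : ∀ (v w x : Fin n → ℝ),
      fderiv ℝ (fun y => fderiv ℝ f y v) x w = fderiv ℝ (fderiv ℝ f) x w v := by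
    intro v w x
    have hdf : DifferentiableAt ℝ (fderiv ℝ f) x :=
      ((hf.fderiv_right (m := (⊤ : ℕ∞)) (by simp)).differentiable (by simp)) x
    rw [fderiv_clm_apply hdf (differentiableAt_const v)]
    simp
  have hsym : IsSymmSndFDerivAt ℝ f u :=
    hf.contDiffAt.isSymmSndFDerivAt (by rw [minSmoothness_of_isRCLikeNormedField]; exact WithTop.coe_le_coe.mpr (le_top : (2:ℕ∞) ≤ ⊤))
  show fderiv ℝ (fun y => fderiv ℝ f y (Pi.single d 1)) u (Pi.single c 1)
      = fderiv ℝ (fun y => fderiv ℝ f y (Pi.single c 1)) u (Pi.single d 1)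
  rw [key, key]
  exact hsym.eq _ _

lemma D_add3 {f g k : (Fin n → ℝ) → ℝ} (hf : ContDiff ℝ (⊤ : ℕ∞) f) (hg : ContDiff ℝ (⊤ : ℕ∞) g)
    (hk : ContDiff ℝ (⊤ : ℕ∞) k) (H : ∀ u, f u + g u + k u = 0) (c : Fin n) (u : Fin n → ℝ) :
    D c f u + D c g u + D c k u = 0 := by
  have hdf := (hf.differentiable (by simp)) u
  have hdg := (hg.differentiable (by simp)) u
  have hdk := (hk.differentiable (by simp)) u
  have e3 : fderiv ℝ (fun x => f x + g x + k x) u = 0 := by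
    rw [funext H]; exact fderiv_const_apply 0
  rw [fderiv_fun_add (hdf.fun_add hdg) hdk, fderiv_fun_add hdf hdg] at e3
  have e4 := ContinuousLinearMap.ext_iff.1 e3 (Pi.single c 1)
  simpa [D] using e4

lemma pi_decomp (u : Fin n → ℝ) : ∑ c, u c • (Pi.single c 1 : Fin n → ℝ) = u := by
  funext j
  simp [Pi.single_apply]

lemma fderiv_pt (L : (Fin n → ℝ) →L[ℝ] ℝ) (u : Fin n → ℝ) :
    L u = ∑ c, u c * L (Pi.single c 1) := by
  conv_lhs => rw [← pi_decomp u]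
  rw [map_sum]
  simp [mul_comm]

lemma line_hasDerivAt {f : (Fin n → ℝ) → ℝ} (hf : ContDiff ℝ (⊤ : ℕ∞) f) (u : Fin n → ℝ) (t : ℝ) :
    HasDerivAt (fun t : ℝ => f (t • u)) (∑ c, u c * D c f (t • u)) t := by
  have h1 : HasDerivAt (fun t : ℝ => t • u) u t := by
    simpa using (hasDerivAt_id t).smul_const u
  have h2 := ((hf.differentiable (by simp)) (t • u)).hasFDerivAt.comp_hasDerivAt t h1
  refine h2.congr_deriv ?_
  simp only [D]
  exact (fderiv_pt (fderiv ℝ f (t • u)) u)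

/-- Pure algebra: a 5-index array, symmetric in the first two slots and in the last
three slots, satisfying the cyclic Monge identity, vanishes. -/
lemma alg_zero (g : Fin n → Fin n → Fin n → Fin n → Fin n → ℝ)
    (h12 : ∀ a b c d e, g a b c d e = g b a c d e)
    (h34 : ∀ a b c d e, g a b c d e = g a b d c e)
    (h45 : ∀ a b c d e, g a b c d e = g a b c e d)
    (hrel : ∀ a b c d e, g a b c d e + g b c a d e + g a c b d e = 0)
    (a b c d e : Fin n) : g a b c d e = 0 := by
  have pairswap : ∀ a b c d e, g a b c d e = g c d a b e := by
    intro a b c d e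
    have R1 := hrel a b c d e
    have R2 := hrel a b d c e
    have R3 := hrel c d a b e
    have R4 := hrel c d b a e
    have e1 : g a b d c e = g a b c d e := (h34 a b c d e).symm
    have e2 : g d a c b e = g a d b c e := by rw [← h12, h34]
    have e3 : g c a d b e = g a c b d e := by rw [← h12, h34]
    have e4 : g c d b a e = g c d a b e := (h34 c d a b e).symm
    have e5 : g d b c a e = g b d a c e := by rw [← h12, h34]
    have e6 : g c b d a e = g b c a d e := by rw [← h12, h34]
    linarith
  have star : ∀ a b c d e, g a b c d e = g b c a d e := by
    intro a b c d e
    calc g a b c d e = g c d a b e := pairswap a b c d e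
      _ = g c d a e b := h45 c d a b e
      _ = g c d e a b := h34 c d a e b
      _ = g e a c d b := pairswap c d e a b
      _ = g a e c d b := h12 e a c d b
      _ = g a e c b d := h45 a e c d b
      _ = g a e b c d := h34 a e c b d
      _ = g b c a e d := pairswap a e b c d
      _ = g b c a d e := h45 b c a e d
  have R1 := hrel a b c d e
  have s1 : g b c a d e = g a b c d e := (star a b c d e).symm
  have s2 : g a c b d e = g a b c d e := by
    rw [star a c b d e, h12, ← star a b c d e]
  linarith

end Stmt7Aux

open Stmt7Aux in
theorem stmt7 (n : ℕ) (h : Fin n → Fin n → (Fin n → ℝ) → ℝ)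
    (hsmooth : ∀ i j, ContDiff ℝ (⊤ : ℕ∞) (h i j))
    (hsymm : ∀ i j, h i j = h j i)
    (hmonge : ∀ m k s : Fin n, ∀ u : Fin n → ℝ,
      fderiv ℝ (h m k) u (Pi.single s 1) +
      fderiv ℝ (h k s) u (Pi.single m 1) +
      fderiv ℝ (h m s) u (Pi.single k 1) = 0) :
    ∀ i j : Fin n, ∃ P : MvPolynomial (Fin n) ℝ,
      P.totalDegree ≤ 2 ∧ ∀ u : Fin n → ℝ, h i j u = MvPolynomial.eval u P := by
  have hs1 : ∀ a b c, ContDiff ℝ (⊤ : ℕ∞) (D c (h a b)) := fun a b c => D_smooth (hsmooth a b) c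
  have hs2 : ∀ a b c d, ContDiff ℝ (⊤ : ℕ∞) (D d (D c (h a b))) := fun a b c d =>
    D_smooth (hs1 a b c) d
  have hB : ∀ m k s u, D s (h m k) u + D m (h k s) u + D k (h m s) u = 0 := by
    intro m k s u; exact hmonge m k s u
  have hT : ∀ m k s d u, D d (D s (h m k)) u + D d (D m (h k s)) u + D d (D k (h m s)) u = 0 :=
    fun m k s d u =>
      D_add3 (hs1 m k s) (hs1 k s m) (hs1 m s k) (fun u => hB m k s u) d u
  have hS : ∀ m k s d e u,
      D e (D d (D s (h m k))) u + D e (D d (D m (h k s))) u + D e (D d (D k (h m s))) u = 0 :=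
    fun m k s d e u =>
      D_add3 (hs2 m k s d) (hs2 k s m d) (hs2 m s k d) (fun u => hT m k s d u) e u
  have hzero : ∀ a b c d e u, D e (D d (D c (h a b))) u = 0 := by
    intro a b c d e u
    refine alg_zero (fun a b c d e => D e (D d (D c (h a b))) u) ?_ ?_ ?_ ?_ a b c d e
    · intro a b c d e; rw [hsymm a b]
    · intro a b c d e; rw [D_comm (hsmooth a b) d c]
    · intro a b c d e
      exact congrFun (D_comm (hs1 a b c) e d) u
    · intro a b c d e; exact hS a b c d e u
  intro i j
  set f := h i j with hfdef
  have hf : ContDiff ℝ (⊤ : ℕ∞) f := hsmooth i j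
  have third : ∀ c d e u, D e (D d (D c f)) u = 0 := fun c d e u => hzero i j c d e u
  have quad : ∀ u : Fin n → ℝ, f u = f 0 + (∑ c, u c * D c f 0)
      + (∑ c, u c * ∑ d, u d * D d (D c f) 0) / 2 := by
    intro u
    have h0 : ((0 : ℝ) • u) = (0 : Fin n → ℝ) := zero_smul ℝ u
    have hg : ∀ t, HasDerivAt (fun t : ℝ => f (t • u)) (∑ c, u c * D c f (t • u)) t :=
      line_hasDerivAt hf u
    have hg1 : ∀ t : ℝ, HasDerivAt (fun t : ℝ => ∑ c, u c * D c f (t • u))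
        (∑ c, u c * ∑ d, u d * D d (D c f) (t • u)) t := fun t =>
      HasDerivAt.fun_sum fun c _ => (line_hasDerivAt (D_smooth hf c) u t).const_mul (u c)
    have hg2 : ∀ t : ℝ, HasDerivAt
        (fun t : ℝ => ∑ c, u c * ∑ d, u d * D d (D c f) (t • u)) 0 t := by
      intro t
      have H : HasDerivAt (fun t : ℝ => ∑ c, u c * ∑ d, u d * D d (D c f) (t • u))
          (∑ c, u c * ∑ d, u d * ∑ e, u e * D e (D d (D c f)) (t • u)) t :=
        HasDerivAt.fun_sum fun c _ => HasDerivAt.const_mul (u c)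
          (HasDerivAt.fun_sum fun d _ =>
            (line_hasDerivAt (D_smooth (D_smooth hf c) d) u t).const_mul (u d))
      simpa [third] using H
    have hconst2 : ∀ t : ℝ, (∑ c, u c * ∑ d, u d * D d (D c f) (t • u))
        = ∑ c, u c * ∑ d, u d * D d (D c f) 0 := by
      intro t
      have := is_const_of_deriv_eq_zero
        (fun t => (hg2 t).differentiableAt) (fun t => (hg2 t).deriv) t 0
      rwa [h0] at this
    have hconst1 : ∀ t : ℝ, (∑ c, u c * D c f (t • u))
        = (∑ c, u c * D c f 0) + t * (∑ c, u c * ∑ d, u d * D d (D c f) 0) := by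
      intro t
      have hK : ∀ s : ℝ, HasDerivAt (fun s : ℝ => (∑ c, u c * D c f (s • u))
          - s * (∑ c, u c * ∑ d, u d * D d (D c f) 0)) 0 s := by
        intro s
        have H2 := (hg1 s).sub (hasDerivAt_mul_const (∑ c, u c * ∑ d, u d * D d (D c f) 0))
        have hh : (∑ c, u c * ∑ d, u d * D d (D c f) (s • u))
            - (∑ c, u c * ∑ d, u d * D d (D c f) 0) = 0 := by rw [hconst2 s]; ring
        rwa [hh] at H2
      have := is_const_of_deriv_eq_zero
        (fun s => (hK s).differentiableAt) (fun s => (hK s).deriv) t 0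
      rw [h0] at this
      simp only [zero_mul, sub_zero] at this
      linarith
    have hK0 : ∀ s : ℝ, HasDerivAt (fun s : ℝ => f (s • u) - s * (∑ c, u c * D c f 0)
        - s ^ 2 / 2 * (∑ c, u c * ∑ d, u d * D d (D c f) 0)) 0 s := by
      intro s
      have hp : HasDerivAt (fun s : ℝ => s ^ 2 / 2 * (∑ c, u c * ∑ d, u d * D d (D c f) 0))
          (s * (∑ c, u c * ∑ d, u d * D d (D c f) 0)) s := by
        have := ((hasDerivAt_pow 2 s).div_const 2).mul_const
          (∑ c, u c * ∑ d, u d * D d (D c f) 0)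
        refine this.congr_deriv ?_
        push_cast
        ring
      have H := ((hg s).sub (hasDerivAt_mul_const (∑ c, u c * D c f 0))).sub hp
      have hh : (∑ c, u c * D c f (s • u)) - (∑ c, u c * D c f 0)
          - s * (∑ c, u c * ∑ d, u d * D d (D c f) 0) = 0 := by rw [hconst1 s]; ring
      rwa [hh] at H
    have hfin := is_const_of_deriv_eq_zero
      (fun s => (hK0 s).differentiableAt) (fun s => (hK0 s).deriv) 1 0
    rw [h0, one_smul] at hfin
    norm_num at hfin
    linarith
  classical
  refine ⟨MvPolynomial.C (f 0) + (∑ c, MvPolynomial.C (D c f 0) * MvPolynomial.X c)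
    + ∑ c : Fin n, ∑ d : Fin n,
        MvPolynomial.C (D d (D c f) 0 / 2) * (MvPolynomial.X c * MvPolynomial.X d), ?_, ?_⟩
  · refine le_trans (MvPolynomial.totalDegree_add _ _) (max_le ?_ ?_)
    · refine le_trans (MvPolynomial.totalDegree_add _ _) (max_le ?_ ?_)
      · simp [MvPolynomial.totalDegree_C]
      · refine MvPolynomial.totalDegree_finsetSum_le fun c _ => ?_
        refine le_trans (MvPolynomial.totalDegree_mul _ _) ?_
        simp [MvPolynomial.totalDegree_C, MvPolynomial.totalDegree_X]
    · refine MvPolynomial.totalDegree_finsetSum_le fun c _ => ?_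
      refine MvPolynomial.totalDegree_finsetSum_le fun d _ => ?_
      refine le_trans (MvPolynomial.totalDegree_mul _ _) ?_
      refine le_trans (add_le_add le_rfl (MvPolynomial.totalDegree_mul _ _)) ?_
      simp [MvPolynomial.totalDegree_C, MvPolynomial.totalDegree_X]
  · intro u
    rw [quad u]
    simp only [map_add, MvPolynomial.eval_C, MvPolynomial.eval_sum, MvPolynomial.eval_mul,
      MvPolynomial.eval_X]
    congr 1
    · congr 1
      exact Finset.sum_congr rfl fun c _ => by ring
    · rw [Finset.sum_div]
      refine Finset.sum_congr rfl fun c _ => ?_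
      rw [mul_comm (u c), Finset.sum_mul, Finset.sum_div]
      refine Finset.sum_congr rfl fun d _ => ?_
      ring
end

section
/- For the system with velocity vector V = (b, c, (b² − ac + bc − 2b + 1)/a) on the region a ≠ 0, the symmetric matrix h with entries h₁₁ = (1−b−c)(b+c−3), h₁₂ = a(b+c−2)+1, h₁₃ = a(b+c−2), h₂₂ = h₂₃ = h₃₃ = −a², satisfies h_{im}V^m_j = h_{jm}V^m_i for all i,j ∈ {1,2,3}. -/
noncomputable def pd3 : Fin 3 → (ℝ → ℝ → ℝ → ℝ) → (ℝ → ℝ → ℝ → ℝ)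
  | 0 => fun F a b c => deriv (fun s => F s b c) a
  | 1 => fun F a b c => deriv (fun s => F a s c) b
  | 2 => fun F a b c => deriv (fun s => F a b s) c

/-- The symmetric Monge metric of the η³ case. -/
noncomputable def h (i j : Fin 3) : ℝ → ℝ → ℝ → ℝ :=
  fun a b c =>
    !![(1-b-c)*(b+c-3), a*(b+c-2)+1, a*(b+c-2);
       a*(b+c-2)+1,     -a^2,        -a^2;
       a*(b+c-2),       -a^2,        -a^2] i j

/-- The velocity vector V = (b, c, (b² − ac + bc − 2b + 1)/a). -/
noncomputable def V : Fin 3 → ℝ → ℝ → ℝ → ℝ :=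
  fun m a b c => ![b, c, (b^2 - a*c + b*c - 2*b + 1)/a] m

lemma dA (a b c : ℝ) (ha : a ≠ 0) :
    deriv (fun s => (b^2 - s*c + b*c - 2*b + 1)/s) a
      = ((-c)*a - (b^2 - a*c + b*c - 2*b + 1))/a^2 := by
  have hn : HasDerivAt (fun s : ℝ => b^2 - s*c + b*c - 2*b + 1) (-c) a := by
    have : HasDerivAt (fun s : ℝ => s*c) c a := by simpa using (hasDerivAt_id a).mul_const c
    simpa using ((((hasDerivAt_const a (b^2)).sub this).add_const (b*c)).sub_const
      (2*b)).add_const 1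
  have := (hn.div (hasDerivAt_id a) ha)
  simpa [Pi.div_def] using this.deriv

lemma dB (a b c : ℝ) :
    deriv (fun s => (s^2 - a*c + s*c - 2*s + 1)/a) b = (2*b + c - 2)/a := by
  have hn : HasDerivAt (fun s : ℝ => s^2 - a*c + s*c - 2*s + 1) (2*b + c - 2) b := by
    have h1 : HasDerivAt (fun s : ℝ => s^2) (2*b) b := by
      simpa using hasDerivAt_pow 2 b
    have h2 : HasDerivAt (fun s : ℝ => s*c) c b := by simpa using (hasDerivAt_id b).mul_const c
    have h3 : HasDerivAt (fun s : ℝ => 2*s) 2 b := by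
      have := (hasDerivAt_id b).const_mul (2:ℝ); simpa using this
    have := (((h1.sub_const (a*c)).add h2).sub h3).add_const 1
    exact this.congr_deriv (by ring)
  simpa using (hn.div_const a).deriv

lemma dC (a b c : ℝ) :
    deriv (fun s => (b^2 - a*s + b*s - 2*b + 1)/a) c = (b - a)/a := by
  have hn : HasDerivAt (fun s : ℝ => b^2 - a*s + b*s - 2*b + 1) (b - a) c := by
    have h1 : HasDerivAt (fun s : ℝ => a*s) a c := by
      simpa using (hasDerivAt_id c).const_mul a
    have h2 : HasDerivAt (fun s : ℝ => b*s) b c := by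
      simpa using (hasDerivAt_id c).const_mul b
    have := (((hasDerivAt_const c (b^2)).sub h1).add h2).sub_const (2*b) |>.add_const 1
    exact this.congr_deriv (by ring)
  simpa using (hn.div_const a).deriv

lemma p00 (a b c : ℝ) : pd3 0 (V 0) a b c = 0 := by simp [pd3, V]
lemma p10 (a b c : ℝ) : pd3 1 (V 0) a b c = 1 := by simp [pd3, V]
lemma p20 (a b c : ℝ) : pd3 2 (V 0) a b c = 0 := by simp [pd3, V]
lemma p01 (a b c : ℝ) : pd3 0 (V 1) a b c = 0 := by simp [pd3, V]
lemma p11 (a b c : ℝ) : pd3 1 (V 1) a b c = 0 := by simp [pd3, V]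
lemma p21 (a b c : ℝ) : pd3 2 (V 1) a b c = 1 := by simp [pd3, V]
lemma p02 (a b c : ℝ) (ha : a ≠ 0) :
    pd3 0 (V 2) a b c = ((-c)*a - (b^2 - a*c + b*c - 2*b + 1))/a^2 := by
  simp only [pd3, V]; exact dA a b c ha
lemma p12 (a b c : ℝ) : pd3 1 (V 2) a b c = (2*b + c - 2)/a := by
  simp only [pd3, V]; exact dB a b c
lemma p22 (a b c : ℝ) : pd3 2 (V 2) a b c = (b - a)/a := by
  simp only [pd3, V]; exact dC a b c

lemma fin_mk_two (h : 2 < 3) : (⟨2, h⟩ : Fin 3) = 2 := rfl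
lemma fin_mk_one (h : 1 < 3) : (⟨1, h⟩ : Fin 3) = 1 := rfl
lemma fin_mk_zero (h : 0 < 3) : (⟨0, h⟩ : Fin 3) = 0 := rfl

lemma h00 (a b c : ℝ) : h 0 0 a b c = (1-b-c)*(b+c-3) := rfl
lemma h01 (a b c : ℝ) : h 0 1 a b c = a*(b+c-2)+1 := rfl
lemma h02 (a b c : ℝ) : h 0 2 a b c = a*(b+c-2) := rfl
lemma h10 (a b c : ℝ) : h 1 0 a b c = a*(b+c-2)+1 := rfl
lemma h11 (a b c : ℝ) : h 1 1 a b c = -a^2 := rfl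
lemma h12 (a b c : ℝ) : h 1 2 a b c = -a^2 := rfl
lemma h20 (a b c : ℝ) : h 2 0 a b c = a*(b+c-2) := rfl
lemma h21 (a b c : ℝ) : h 2 1 a b c = -a^2 := rfl
lemma h22 (a b c : ℝ) : h 2 2 a b c = -a^2 := rfl

set_option maxHeartbeats 2000000 in
theorem stmt9 :
    ∀ i j : Fin 3, ∀ a b c : ℝ, a ≠ 0 →
      ∑ m : Fin 3, h i m a b c * pd3 j (V m) a b c =
      ∑ m : Fin 3, h j m a b c * pd3 i (V m) a b c := by
  intro i j a b c ha
  fin_cases i <;> fin_cases j <;>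
    simp only [Fin.sum_univ_three, fin_mk_two, fin_mk_one, fin_mk_zero,
      h00, h01, h02, h10, h11, h12, h20, h21, h22,
      p00 a b c, p10 a b c, p20 a b c, p01 a b c, p11 a b c, p21 a b c,
      p02 a b c ha, p12 a b c, p22 a b c] <;>
    field_simp <;> ring
end
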